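/- arXiv:0906.3993 — 6 statements merged into one kernel-verified Lean document; each statement's English description precedes it below -/
import Mathlib

section
/- Let G be a finite simple graph with n vertices and minimum degree δ ≥ 99. Then the signed domination number of G satisfies γ_s(G) ≤ (4·√(ln(δ+1)/(δ+1)) + 1/(δ+1)) · n. -/
/-!
Label every vertex `+1` with probability `(1 + ε)/2` and `-1` otherwise, independently, where
`ε = 4 √(ln (δ+1) / (δ+1))`; the expected label sum is `ε n`. A vertex whose closed neighbourhood
sums to at most `0` is repaired by relabelling its whole closed neighbourhood `+1`, at a cost of at
most `2 (d(v) + 1)`. By the exponential Markov inequality with `e^t = 1 + ε`, a repair at `v` is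
needed with probability at most `(1 - ε²/2)^(d(v)+1) ≤ exp (-8 (d(v)+1) ln (δ+1) / (δ+1))`, so the
expected repair cost is at most `n / (δ+1)`, and some labelling is no worse than the mean.
-/

/-- `f : V → ℤ` is a signed domination function of `G`: it takes values in `{-1, +1}`
and sums to at least `1` over every closed neighbourhood. -/
def SimpleGraph.IsSignedDominationFunction {V : Type*} [Fintype V] [DecidableEq V]
    (G : SimpleGraph V) [DecidableRel G.Adj] (f : V → ℤ) : Prop :=
  (∀ v, f v = 1 ∨ f v = -1) ∧
  ∀ v : V, 1 ≤ ∑ u ∈ insert v (G.neighborFinset v), f u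

/-- The signed domination number `γ_s(G)`. -/
noncomputable def SimpleGraph.signedDominationNumber {V : Type*} [Fintype V] [DecidableEq V]
    (G : SimpleGraph V) [DecidableRel G.Adj] : ℤ :=
  sInf {s : ℤ | ∃ f : V → ℤ, G.IsSignedDominationFunction f ∧ s = ∑ v, f v}

open Finset

namespace SignedDomination

def boolSign (b : Bool) : ℤ := if b then 1 else -1

theorem boolSign_eq_one_or (b : Bool) : boolSign b = 1 ∨ boolSign b = -1 := by
  cases b <;> simp [boolSign]

theorem boolSign_le_or (b c : Bool) : boolSign b ≤ boolSign (b || c) := by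
  cases b <;> cases c <;> simp [boolSign]

theorem boolSign_or_decide_le (b : Bool) (p : Prop) [Decidable p] :
    boolSign (b || decide p) ≤ boolSign b + if p then 2 else 0 := by
  cases b <;> by_cases p <;> simp [boolSign, *]

section ProductWeight

variable {V α : Type*} [Fintype V] [Fintype α]

/-- The probability of `f` when the values `f v` are drawn independently with law `w`. -/
def productWeight (w : α → ℝ) (f : V → α) : ℝ := ∏ v, w (f v)

theorem sum_productWeight_mul_prod [DecidableEq V] (w h : α → ℝ) (hw : ∑ a, w a = 1)
    (T : Finset V) :
    ∑ f : V → α, productWeight w f * ∏ u ∈ T, h (f u) = (∑ a, w a * h a) ^ #T := by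
  have hfactor : ∀ f : V → α, productWeight w f * ∏ u ∈ T, h (f u) =
      ∏ u, w (f u) * if u ∈ T then h (f u) else 1 := by
    intro f
    rw [prod_mul_distrib, prod_ite_mem, univ_inter]
    rfl
  rw [sum_congr rfl fun f _ => hfactor f,
    ← Fintype.prod_sum fun u a => w a * if u ∈ T then h a else 1]
  simp_rw [mul_ite, mul_one, sum_ite_irrel, hw]
  rw [prod_ite_mem, univ_inter, prod_const]

theorem sum_productWeight [DecidableEq V] (w : α → ℝ) (hw : ∑ a, w a = 1) :
    ∑ f : V → α, productWeight w f = 1 := by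
  simpa using sum_productWeight_mul_prod w 1 hw (∅ : Finset V)

end ProductWeight

def bernoulliWeight (q : ℝ) (b : Bool) : ℝ := if b then q else 1 - q

theorem sum_bernoulliWeight (q : ℝ) : ∑ b, bernoulliWeight q b = 1 := by
  simp [bernoulliWeight]

section Bernoulli

variable {V : Type*} [Fintype V] {q : ℝ}

theorem productWeight_bernoulli_nonneg (hq0 : 0 ≤ q) (hq1 : q ≤ 1) (f : V → Bool) :
    0 ≤ productWeight (bernoulliWeight q) f :=
  prod_nonneg fun v _ => by unfold bernoulliWeight; split_ifs <;> linarith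

theorem productWeight_bernoulli_pos (hq0 : 0 < q) (hq1 : q < 1) (f : V → Bool) :
    0 < productWeight (bernoulliWeight q) f :=
  prod_pos fun v _ => by unfold bernoulliWeight; split_ifs <;> linarith

theorem sum_productWeight_bernoulli_mul_boolSign [DecidableEq V] (q : ℝ) (v : V) :
    ∑ f : V → Bool, productWeight (bernoulliWeight q) f * (boolSign (f v) : ℝ) = 2 * q - 1 := by
  have h := sum_productWeight_mul_prod (bernoulliWeight q) (fun b => (boolSign b : ℝ))
    (sum_bernoulliWeight q) {v}
  simp only [prod_singleton, card_singleton, pow_one, Fintype.sum_bool] at h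
  rw [h]
  simp [bernoulliWeight, boolSign]
  ring

end Bernoulli

end SignedDomination

theorem exists_le_of_sum_weight_mul_le {ι : Type*} [Fintype ι] [Nonempty ι] {W X : ι → ℝ} {E : ℝ}
    (hW : ∀ i, 0 < W i) (hW1 : ∑ i, W i = 1) (hE : ∑ i, W i * X i ≤ E) : ∃ i, X i ≤ E := by
  obtain ⟨i, -, hi⟩ := exists_le_of_sum_le (s := univ) (f := fun i => W i * X i)
    (g := fun i => W i * E) univ_nonempty (by rwa [← sum_mul, hW1, one_mul])
  exact ⟨i, le_of_mul_le_mul_left hi (hW i)⟩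

namespace Real

theorem sixteen_mul_log_lt_self {M : ℝ} (hM : 80 ≤ M) : 16 * log M < M := by
  have hsplit : log M = log (M / 32) + 5 * log 2 := by
    rw [show (5 : ℝ) * log 2 = log (2 ^ 5) by rw [log_pow]; norm_num,
      ← log_mul (by positivity) (by positivity)]
    norm_num
  have := log_le_sub_one_of_pos (show 0 < M / 32 by positivity)
  linarith [log_two_lt_d9]

theorem two_mul_mul_le_exp {M k : ℝ} (hM : 0 < M) (hlog : 1 ≤ log M) (hk : M ≤ k) :
    2 * k * M ≤ exp (8 * (log M / M) * k) := by
  obtain ⟨y, hy⟩ : ∃ y, y = 8 * k / M - 2 := ⟨_, rfl⟩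
  have hy6 : 6 ≤ y := by
    rw [hy, le_sub_iff_add_le, le_div_iff₀ hM]
    linarith
  calc 2 * k * M ≤ M ^ 2 * (1 + y) := by
        rw [hy]
        field_simp
        nlinarith
    _ ≤ M ^ 2 * (1 + y * log M) := by gcongr; nlinarith
    _ ≤ M ^ 2 * exp (y * log M) := by gcongr; linarith [add_one_le_exp (y * log M)]
    _ = exp (8 * (log M / M) * k) := by
        rw [← exp_log (by positivity : 0 < M ^ 2), ← exp_add, log_pow, hy]
        congr 1
        field_simp
        ring

theorem two_mul_one_sub_pow_le_inv {M : ℝ} (hM : 0 < M) (hlog : 1 ≤ log M) (h8 : 8 * log M ≤ M)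
    {k : ℕ} (hk : M ≤ k) : 2 * k * (1 - 8 * (log M / M)) ^ k ≤ 1 / M := by
  have hbase : 0 ≤ 1 - 8 * (log M / M) := by
    rwa [sub_nonneg, ← mul_div_assoc, div_le_one hM]
  have hpow : (1 - 8 * (log M / M)) ^ k ≤ exp (-(8 * (log M / M) * k)) := by
    calc _ ≤ exp (-(8 * (log M / M))) ^ k := by
          gcongr
          linarith [add_one_le_exp (-(8 * (log M / M)))]
      _ = _ := by rw [← exp_nat_mul]; ring_nf
  calc 2 * k * (1 - 8 * (log M / M)) ^ k ≤ 2 * k * exp (-(8 * (log M / M) * k)) := by gcongr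
    _ ≤ 1 / M := by
      rw [exp_neg, ← div_eq_mul_inv, div_le_div_iff₀ (exp_pos _) hM]
      linarith [two_mul_mul_le_exp hM hlog hk]

end Real

namespace SimpleGraph

open SignedDomination

variable {V : Type*} [Fintype V] [DecidableEq V] (G : SimpleGraph V) [DecidableRel G.Adj]

theorem signedDominationNumber_le {f : V → ℤ} (hf : G.IsSignedDominationFunction f) :
    G.signedDominationNumber ≤ ∑ v, f v := by
  refine csInf_le ⟨-(Fintype.card V : ℤ), ?_⟩ ⟨f, hf, rfl⟩
  rintro _ ⟨g, hg, rfl⟩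
  calc -(Fintype.card V : ℤ) = ∑ _v : V, (-1 : ℤ) := by simp
    _ ≤ ∑ v, g v := sum_le_sum fun v _ => by rcases hg.1 v with h | h <;> omega

theorem card_insert_neighborFinset (v : V) :
    #(insert v (G.neighborFinset v)) = G.degree v + 1 := by
  rw [card_insert_of_notMem (G.notMem_neighborFinset_self v), card_neighborFinset_eq_degree]

def deficient (f : V → Bool) : Finset V :=
  {v | ∑ u ∈ insert v (G.neighborFinset v), boolSign (f u) ≤ 0}

def repair (f : V → Bool) (u : V) : Bool :=
  f u || decide (u ∈ (G.deficient f).biUnion fun v => insert v (G.neighborFinset v))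

theorem isSignedDominationFunction_repair (f : V → Bool) :
    G.IsSignedDominationFunction (boolSign ∘ G.repair f) := by
  refine ⟨fun v => boolSign_eq_one_or _, fun v => ?_⟩
  by_cases hv : v ∈ G.deficient f
  · have hplus : ∀ u ∈ insert v (G.neighborFinset v), (boolSign ∘ G.repair f) u = 1 := by
      intro u hu
      have hF : u ∈ (G.deficient f).biUnion fun v => insert v (G.neighborFinset v) :=
        mem_biUnion.2 ⟨v, hv, hu⟩
      simp [repair, boolSign, hF]
    rw [sum_congr rfl hplus, sum_const, G.card_insert_neighborFinset]
    simp
  · simp only [deficient, mem_filter, mem_univ, true_and, not_le] at hv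
    exact hv.trans_le (sum_le_sum fun u _ => boolSign_le_or _ _)

theorem signedDominationNumber_le_sum_repairCost (f : V → Bool) :
    G.signedDominationNumber ≤
      ∑ v, (boolSign (f v) + if v ∈ G.deficient f then 2 * ((G.degree v : ℤ) + 1) else 0) := by
  set F := (G.deficient f).biUnion fun v => insert v (G.neighborFinset v)
  calc G.signedDominationNumber ≤ ∑ v, boolSign (G.repair f v) :=
        G.signedDominationNumber_le (G.isSignedDominationFunction_repair f)
    _ ≤ ∑ v, (boolSign (f v) + if v ∈ F then 2 else 0) :=
        sum_le_sum fun v _ => boolSign_or_decide_le _ _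
    _ = ∑ v, boolSign (f v) + 2 * #F := by
        rw [sum_add_distrib, sum_ite_mem, univ_inter, sum_const, nsmul_eq_mul, mul_comm]
    _ ≤ ∑ v, boolSign (f v) + 2 * ∑ v ∈ G.deficient f, ((G.degree v : ℤ) + 1) := by
        gcongr
        exact_mod_cast card_biUnion_le.trans_eq
          (sum_congr rfl fun v _ => G.card_insert_neighborFinset v)
    _ = _ := by rw [mul_sum, sum_add_distrib, sum_ite_mem, univ_inter]

theorem indicator_deficient_le_prod_exp {t : ℝ} (ht : 0 ≤ t) (f : V → Bool) (v : V) :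
    (if v ∈ G.deficient f then 1 else 0 : ℝ) ≤
      ∏ u ∈ insert v (G.neighborFinset v), Real.exp (-t * boolSign (f u)) := by
  rw [← Real.exp_sum, ← mul_sum]
  split_ifs with hv
  · refine Real.one_le_exp (mul_nonneg_of_nonpos_of_nonpos (by linarith) ?_)
    simp only [deficient, mem_filter, mem_univ, true_and] at hv
    exact_mod_cast hv
  · exact (Real.exp_pos _).le

theorem sum_productWeight_bernoulli_deficient_le {q t : ℝ} (hq0 : 0 ≤ q) (hq1 : q ≤ 1)
    (ht : 0 ≤ t) (v : V) :
    ∑ f : V → Bool, productWeight (bernoulliWeight q) f * (if v ∈ G.deficient f then 1 else 0) ≤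
      (q * Real.exp (-t) + (1 - q) * Real.exp t) ^ (G.degree v + 1) := by
  calc _ ≤ ∑ f : V → Bool, productWeight (bernoulliWeight q) f *
          ∏ u ∈ insert v (G.neighborFinset v), Real.exp (-t * boolSign (f u)) :=
        sum_le_sum fun f _ => mul_le_mul_of_nonneg_left (G.indicator_deficient_le_prod_exp ht f v)
          (productWeight_bernoulli_nonneg hq0 hq1 f)
    _ = _ := by
        rw [sum_productWeight_mul_prod _ (fun b => Real.exp (-t * boolSign b))
          (sum_bernoulliWeight q), G.card_insert_neighborFinset]
        simp [bernoulliWeight, boolSign]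

theorem sum_productWeight_bernoulli_deficient_le_one_sub_sq {ε : ℝ} (hε0 : 0 ≤ ε) (hε1 : ε ≤ 1)
    (v : V) :
    ∑ f : V → Bool, productWeight (bernoulliWeight ((1 + ε) / 2)) f *
        (if v ∈ G.deficient f then 1 else 0) ≤ (1 - ε ^ 2 / 2) ^ (G.degree v + 1) := by
  convert G.sum_productWeight_bernoulli_deficient_le (q := (1 + ε) / 2) (t := Real.log (1 + ε))
    (by linarith) (by linarith) (Real.log_nonneg (by linarith)) v using 2
  rw [Real.exp_neg, Real.exp_log (by linarith)]
  field_simp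
  ring

theorem signedDominationNumber_le_of_one_sub_sq_pow_le {ε β : ℝ} (hε0 : 0 ≤ ε) (hε1 : ε < 1)
    (hβ : ∀ v, 2 * ((G.degree v : ℝ) + 1) * (1 - ε ^ 2 / 2) ^ (G.degree v + 1) ≤ β) :
    (G.signedDominationNumber : ℝ) ≤ (ε + β) * Fintype.card V := by
  set W := productWeight (V := V) (bernoulliWeight ((1 + ε) / 2))
  have hvertex : ∀ v, ∑ f, W f * ((boolSign (f v) : ℝ) +
      if v ∈ G.deficient f then 2 * ((G.degree v : ℝ) + 1) else 0) ≤ ε + β := by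
    intro v
    have hsplit : ∀ f : V → Bool, W f * ((boolSign (f v) : ℝ) +
        if v ∈ G.deficient f then 2 * ((G.degree v : ℝ) + 1) else 0) =
        W f * boolSign (f v) + 2 * ((G.degree v : ℝ) + 1) *
          (W f * if v ∈ G.deficient f then 1 else 0) := by
      intro f; split_ifs <;> ring
    rw [sum_congr rfl fun f _ => hsplit f, sum_add_distrib, ← mul_sum,
      sum_productWeight_bernoulli_mul_boolSign]
    have hrepair := mul_le_mul_of_nonneg_left
      (G.sum_productWeight_bernoulli_deficient_le_one_sub_sq hε0 hε1.le v)
      (by positivity : 0 ≤ 2 * ((G.degree v : ℝ) + 1))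
    linarith [hβ v]
  obtain ⟨f, hf⟩ := exists_le_of_sum_weight_mul_le (W := W)
    (X := fun f => ((∑ v, (boolSign (f v) +
      if v ∈ G.deficient f then 2 * ((G.degree v : ℤ) + 1) else 0) : ℤ) : ℝ))
    (productWeight_bernoulli_pos (by linarith) (by linarith))
    (sum_productWeight _ (sum_bernoulliWeight _))
    (E := (ε + β) * Fintype.card V) (by
      push_cast
      simp_rw [mul_sum]
      rw [sum_comm]
      calc _ ≤ ∑ v : V, (ε + β) := sum_le_sum fun v _ => hvertex v
        _ = _ := by rw [sum_const, card_univ, nsmul_eq_mul, mul_comm])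
  exact (Int.cast_le.2 (G.signedDominationNumber_le_sum_repairCost f)).trans hf

end SimpleGraph

theorem signed_domination_upper_bound_furedi_mubayi_general
    {V : Type*} [Fintype V] [DecidableEq V]
    (G : SimpleGraph V) [DecidableRel G.Adj]
    (δ : ℕ) (hδdef : δ = G.minDegree) (hδ : 99 ≤ δ) :
    (G.signedDominationNumber : ℝ) ≤
      (4 * Real.sqrt (Real.log ((δ : ℝ) + 1) / ((δ : ℝ) + 1)) + 1 / ((δ : ℝ) + 1)) *
        (Fintype.card V : ℝ) := by
  obtain ⟨M, hM⟩ : ∃ M : ℝ, M = δ + 1 := ⟨_, rfl⟩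
  have hM100 : 100 ≤ M := by rw [hM]; exact_mod_cast Nat.succ_le_succ hδ
  have hlog : 1 ≤ Real.log M := by
    rw [Real.le_log_iff_exp_le (by linarith)]
    linarith [Real.exp_one_lt_d9]
  have h16 := Real.sixteen_mul_log_lt_self (by linarith : 80 ≤ M)
  have hsq : (4 * Real.sqrt (Real.log M / M)) ^ 2 = 16 * (Real.log M / M) := by
    rw [mul_pow, Real.sq_sqrt (by positivity)]
    norm_num
  rw [← hM]
  refine G.signedDominationNumber_le_of_one_sub_sq_pow_le (by positivity) ?_ fun v => ?_
  · refine lt_of_pow_lt_pow_left₀ 2 zero_le_one ?_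
    rwa [hsq, one_pow, ← mul_div_assoc, div_lt_one (by linarith)]
  · have hdeg : M ≤ (G.degree v + 1 : ℕ) := by
      rw [hM, hδdef]
      exact_mod_cast Nat.succ_le_succ (G.minDegree_le_degree v)
    rw [hsq]
    convert Real.two_mul_one_sub_pow_le_inv (by linarith) hlog (by linarith) hdeg using 2
    · push_cast; ring
    · ring

theorem signed_domination_upper_bound_furedi_mubayi
    {V : Type*} [Fintype V] [DecidableEq V] [Nonempty V]
    (G : SimpleGraph V) [DecidableRel G.Adj]
    (δ : ℕ) (hδdef : δ = G.minDegree) (hδ : 99 ≤ δ) :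
    (G.signedDominationNumber : ℝ) ≤
      (4 * Real.sqrt (Real.log ((δ : ℝ) + 1) / ((δ : ℝ) + 1)) + 1 / ((δ : ℝ) + 1)) *
        (Fintype.card V : ℝ) :=
  signed_domination_upper_bound_furedi_mubayi_general G δ hδdef hδ
end

section
/- Let G be a finite simple graph with n vertices whose degree sequence listed in nondecreasing order is d_1 ≤ d_2 ≤ ... ≤ d_n. If k is the smallest integer for which ∑_{i=0}^{k−1} d_{n−i} ≥ 2(n−k) + ∑_{i=1}^{n−k} d_i, then the signed domination number of G satisfies γ_s(G) ≥ 2k − n. -/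
/-!
Split the vertices into `P = f⁻¹(1)` and `M = f⁻¹(-1)`. The closed-neighbourhood condition
says that a vertex of `M` has at least two more neighbours in `P` than in `M`, and a vertex of
`P` at least as many in `P` as in `M`; counting the `M`–`P` edges from both sides then gives
`2|M| + ∑_M deg ≤ ∑_P deg`. Since `∑_M deg` is at least the sum of the `|M|` smallest degrees
and `∑_P deg` at most the sum of the `|P|` largest, `j = |P|` satisfies the defining inequality
of `k`, so `k ≤ |P|` and `∑ f = |P| - |M| ≥ 2k - n`.
-/

open Finset

section SortedSums

variable {M : Type*} [AddCommMonoid M] [LinearOrder M] [IsOrderedAddMonoid M]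

theorem Finset.sum_le_sum_of_card_eq_of_forall_le {ι : Type*} {s t : Finset ι} {f : ι → M}
    (hst : #s = #t) (h : ∀ i ∈ s, ∀ j ∈ t, f i ≤ f j) : ∑ i ∈ s, f i ≤ ∑ j ∈ t, f j := by
  rcases s.eq_empty_or_nonempty with rfl | hs
  · rw [card_empty, eq_comm, card_eq_zero] at hst
    simp [hst]
  obtain ⟨i, hi, hmax⟩ := s.exists_max_image f hs
  calc ∑ i ∈ s, f i ≤ #s • f i := sum_le_card_nsmul _ _ _ hmax
    _ = #t • f i := by rw [hst]
    _ ≤ ∑ j ∈ t, f j := card_nsmul_le_sum _ _ _ fun j hj => h i hi j hj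

variable {α : Type*} [LinearOrder α] {f : α → M} {s t : Finset α}

theorem Monotone.sum_le_sum_of_isLowerSet (hf : Monotone f) (hs : IsLowerSet (s : Set α))
    (hst : #s = #t) : ∑ i ∈ s, f i ≤ ∑ i ∈ t, f i := by
  rw [← sum_inter_add_sum_sdiff s t, ← sum_inter_add_sum_sdiff t s, inter_comm]
  refine add_le_add le_rfl <|
    sum_le_sum_of_card_eq_of_forall_le (card_sdiff_comm hst) fun i hi j hj => ?_
  rw [mem_sdiff] at hi hj
  exact hf (le_of_not_ge fun hji => hj.2 (hs hji hi.1))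

theorem Monotone.sum_le_sum_of_isUpperSet (hf : Monotone f) (hs : IsUpperSet (s : Set α))
    (hst : #t = #s) : ∑ i ∈ t, f i ≤ ∑ i ∈ s, f i := by
  rw [← sum_inter_add_sum_sdiff s t, ← sum_inter_add_sum_sdiff t s, inter_comm]
  refine add_le_add le_rfl <|
    sum_le_sum_of_card_eq_of_forall_le (card_sdiff_comm hst) fun i hi j hj => ?_
  rw [mem_sdiff] at hi hj
  exact hf (le_of_not_ge fun hji => hi.2 (hs hji hj.1))

variable {n : ℕ} {d : Fin n → M}

theorem Monotone.sum_filter_val_lt_card_le (hd : Monotone d) (S : Finset (Fin n)) :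
    ∑ i ∈ univ.filter (fun i : Fin n => (i : ℕ) < #S), d i ≤ ∑ i ∈ S, d i := by
  refine hd.sum_le_sum_of_isLowerSet (fun i j hji hj => ?_) ?_
  · simp only [coe_filter, mem_univ, true_and, Set.mem_ofPred_eq] at hj ⊢
    exact lt_of_le_of_lt (Fin.le_def.mp hji) hj
  · rw [Fin.card_filter_val_lt, min_eq_right (card_le_univ S |>.trans_eq (Fintype.card_fin n))]

theorem Monotone.sum_le_sum_filter_sub_card_le_val (hd : Monotone d) (S : Finset (Fin n)) :
    ∑ i ∈ S, d i ≤ ∑ i ∈ univ.filter (fun i : Fin n => n - #S ≤ (i : ℕ)), d i := by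
  refine hd.sum_le_sum_of_isUpperSet (fun i j hij hi => ?_) ?_
  · simp only [coe_filter, mem_univ, true_and, Set.mem_ofPred_eq] at hi ⊢
    exact hi.trans (Fin.le_def.mp hij)
  · have hS : #S ≤ n := card_le_univ S |>.trans_eq (Fintype.card_fin n)
    have := card_filter_add_card_filter_not (s := (univ : Finset (Fin n)))
      (fun i : Fin n => (i : ℕ) < n - #S)
    simp only [not_lt, card_univ, Fintype.card_fin, Fin.card_filter_val_lt] at this
    omega

end SortedSums

section PlusMinusOne

variable {ι : Type*} {f : ι → ℤ} {s : Finset ι}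

theorem Finset.card_filter_eq_one_add_card_filter_eq_neg_one (hf : ∀ i ∈ s, f i = 1 ∨ f i = -1) :
    #{i ∈ s | f i = 1} + #{i ∈ s | f i = -1} = #s := by
  rw [← card_filter_add_card_filter_not (s := s) (fun i => f i = 1)]
  congr 2
  refine filter_congr fun i hi => ?_
  rcases hf i hi with h | h <;> simp [h]

theorem Finset.sum_eq_card_filter_eq_one_sub_card_filter_eq_neg_one
    (hf : ∀ i ∈ s, f i = 1 ∨ f i = -1) :
    ∑ i ∈ s, f i = #{i ∈ s | f i = 1} - #{i ∈ s | f i = -1} := by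
  rw [← sum_filter_add_sum_filter_not s (fun i => f i = 1)]
  have hneg : {i ∈ s | ¬f i = 1} = {i ∈ s | f i = -1} :=
    filter_congr fun i hi => by rcases hf i hi with h | h <;> simp [h]
  rw [hneg, sum_congr rfl fun i hi => (mem_filter.mp hi).2,
    sum_congr rfl fun i hi => (mem_filter.mp hi).2]
  simp [sub_eq_add_neg]

end PlusMinusOne

namespace SimpleGraph

variable {V : Type*} [Fintype V] [DecidableEq V] (G : SimpleGraph V) [DecidableRel G.Adj]
  {f : V → ℤ}

theorem isSignedDominationFunction_one : G.IsSignedDominationFunction 1 := by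
  refine ⟨fun _ => Or.inl rfl, fun v => ?_⟩
  simp

variable {G}

theorem IsSignedDominationFunction.le_card_sub_card (hf : G.IsSignedDominationFunction f)
    (v : V) :
    1 - f v ≤ #{u ∈ G.neighborFinset v | f u = 1} - #{u ∈ G.neighborFinset v | f u = -1} := by
  have h := hf.2 v
  rw [sum_insert (G.notMem_neighborFinset_self v),
    sum_eq_card_filter_eq_one_sub_card_filter_eq_neg_one fun u _ => hf.1 u] at h
  linarith

theorem IsSignedDominationFunction.card_add_card_eq_degree (hf : G.IsSignedDominationFunction f)
    (v : V) :
    #{u ∈ G.neighborFinset v | f u = 1} + #{u ∈ G.neighborFinset v | f u = -1} = G.degree v :=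
  card_filter_eq_one_add_card_filter_eq_neg_one fun u _ => hf.1 u

theorem IsSignedDominationFunction.two_mul_card_add_sum_degree_le
    (hf : G.IsSignedDominationFunction f) :
    2 * #{v | f v = -1} + ∑ v with f v = -1, G.degree v ≤ ∑ v with f v = 1, G.degree v := by
  set P : Finset V := {v | f v = 1}
  set M : Finset V := {v | f v = -1}
  have hP v : {u ∈ G.neighborFinset v | f u = 1} = P.bipartiteAbove G.Adj v := by
    ext u; simp [P, bipartiteAbove, and_comm]
  have hM v : {u ∈ G.neighborFinset v | f u = -1} = M.bipartiteBelow G.Adj v := by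
    ext u; simp [M, bipartiteBelow, G.adj_comm, and_comm]
  have hMdeg : ∀ v ∈ M, G.degree v + 2 ≤ 2 * #(P.bipartiteAbove G.Adj v) := fun v hv => by
    have h1 := hf.le_card_sub_card v
    have h2 := hf.card_add_card_eq_degree v
    rw [hP, hM] at h1 h2
    rw [(mem_filter.mp hv).2] at h1
    omega
  have hPdeg : ∀ u ∈ P, 2 * #(M.bipartiteBelow G.Adj u) ≤ G.degree u := fun u hu => by
    have h1 := hf.le_card_sub_card u
    have h2 := hf.card_add_card_eq_degree u
    rw [hP, hM] at h1 h2
    rw [(mem_filter.mp hu).2] at h1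
    omega
  calc 2 * #M + ∑ v ∈ M, G.degree v = ∑ v ∈ M, (G.degree v + 2) := by
        rw [sum_add_distrib, sum_const, smul_eq_mul, add_comm, mul_comm]
    _ ≤ ∑ v ∈ M, 2 * #(P.bipartiteAbove G.Adj v) := sum_le_sum hMdeg
    _ = ∑ u ∈ P, 2 * #(M.bipartiteBelow G.Adj u) := by
        rw [← mul_sum, ← mul_sum, sum_card_bipartiteAbove_eq_sum_card_bipartiteBelow]
    _ ≤ ∑ u ∈ P, G.degree u := sum_le_sum hPdeg

end SimpleGraph

open Finset in
theorem signed_domination_lower_bound_dunbar_general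
    {V : Type*} [Fintype V] [DecidableEq V] (G : SimpleGraph V) [DecidableRel G.Adj]
    (n : ℕ) (hn : n = Fintype.card V)
    (σ : V ≃ Fin n) (d : Fin n → ℕ) (hmono : Monotone d)
    (hdeg : ∀ v : V, d (σ v) = G.degree v)
    (k : ℕ)
    (hsmallest : ∀ j : ℕ, j ≤ n →
      (2 * (n - j) + ∑ i ∈ univ.filter (fun i : Fin n => (i : ℕ) < n - j), d i ≤
        ∑ i ∈ univ.filter (fun i : Fin n => n - j ≤ (i : ℕ)), d i) → k ≤ j) :
    2 * (k : ℤ) - (n : ℤ) ≤ G.signedDominationNumber := by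
  refine le_csInf ⟨_, 1, G.isSignedDominationFunction_one, rfl⟩ ?_
  rintro _ ⟨f, hf, rfl⟩
  set P : Finset V := {v | f v = 1}
  set M : Finset V := {v | f v = -1}
  have hPM : #P + #M = n := hn ▸ card_filter_eq_one_add_card_filter_eq_neg_one fun v _ => hf.1 v
  have hsum_degree (S : Finset V) : ∑ v ∈ S, G.degree v = ∑ i ∈ S.map σ.toEmbedding, d i := by
    simp [hdeg]
  have hkP : k ≤ #P := hsmallest #P (by omega) <| calc
    _ = 2 * #M + ∑ i ∈ univ.filter (fun i : Fin n => (i : ℕ) < #(M.map σ.toEmbedding)), d i := by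
        rw [card_map, show n - #P = #M by omega]
    _ ≤ 2 * #M + ∑ v ∈ M, G.degree v := by
        rw [hsum_degree]; exact Nat.add_le_add_left (hmono.sum_filter_val_lt_card_le _) _
    _ ≤ ∑ v ∈ P, G.degree v := hf.two_mul_card_add_sum_degree_le
    _ ≤ ∑ i ∈ univ.filter (fun i : Fin n => n - #(P.map σ.toEmbedding) ≤ (i : ℕ)), d i := by
        rw [hsum_degree]; exact hmono.sum_le_sum_filter_sub_card_le_val _
    _ = _ := by rw [card_map]
  have hsum : ∑ v, f v = #P - #M :=
    sum_eq_card_filter_eq_one_sub_card_filter_eq_neg_one fun v _ => hf.1 v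
  omega

open Finset in
theorem signed_domination_lower_bound_dunbar
    {V : Type*} [Fintype V] [DecidableEq V] (G : SimpleGraph V) [DecidableRel G.Adj]
    (n : ℕ) (hn : n = Fintype.card V)
    (σ : V ≃ Fin n) (d : Fin n → ℕ) (hmono : Monotone d)
    (hdeg : ∀ v : V, d (σ v) = G.degree v)
    (k : ℕ) (hk : k ≤ n)
    (hcond : 2 * (n - k) + ∑ i ∈ univ.filter (fun i : Fin n => (i : ℕ) < n - k), d i ≤
             ∑ i ∈ univ.filter (fun i : Fin n => n - k ≤ (i : ℕ)), d i)
    (hsmallest : ∀ j : ℕ, j ≤ n →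
      (2 * (n - j) + ∑ i ∈ univ.filter (fun i : Fin n => (i : ℕ) < n - j), d i ≤
        ∑ i ∈ univ.filter (fun i : Fin n => n - j ≤ (i : ℕ)), d i) → k ≤ j) :
    2 * (k : ℤ) - (n : ℤ) ≤ G.signedDominationNumber :=
  signed_domination_lower_bound_dunbar_general G n hn σ d hmono hdeg k hsmallest
end

section
/- Let d ≥ 2 be an integer, 0 ≤ p < 1 a real number, and define f(d,p) = ∑_{m=0}^{⌈d/2⌉} (⌈d/2⌉ − m + 1) · C(d+1, m) · p^m · (1−p)^{d+1−m}. If d is odd, then f(d+1, p) < 2(1−p)·f(d, p). -/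
/-- The function `f(d,p) = ∑_{m=0}^{⌈d/2⌉} (⌈d/2⌉ - m + 1) C(d+1,m) pᵐ (1-p)^{d+1-m}`
(note that `⌈d/2⌉ = (d+1)/2` in natural-number arithmetic). -/
noncomputable def fdp (d : ℕ) (p : ℝ) : ℝ :=
  ∑ m ∈ Finset.range ((d + 1) / 2 + 1),
    (((d + 1) / 2 - m + 1 : ℕ) : ℝ) * (Nat.choose (d + 1) m : ℝ) * p ^ m *
      (1 - p) ^ (d + 1 - m)

theorem fdp_odd_step (d : ℕ) (hd : 2 ≤ d) (hodd : Odd d)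
    (p : ℝ) (hp0 : 0 ≤ p) (hp1 : p < 1) :
    fdp (d + 1) p < 2 * (1 - p) * fdp d p := by
  obtain ⟨k, hk⟩ := hodd
  subst hk
  have h1p : (0:ℝ) < 1 - p := by linarith
  unfold fdp
  have e1 : (2*k+1+1+1)/2 = k+1 := by omega
  have e2 : (2*k+1+1)/2 = k+1 := by omega
  simp only [e1, e2]
  rw [Finset.mul_sum]
  apply Finset.sum_lt_sum
  · intro m hm
    have hmle : m ≤ k + 1 := by
      have := Finset.mem_range.mp hm; omega
    have hC : Nat.choose (2*k+1+1+1) m ≤ 2 * Nat.choose (2*k+1+1) m := by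
      rcases Nat.eq_zero_or_pos m with h0 | hpos
      · subst h0; simp
      · obtain ⟨j, rfl⟩ := Nat.exists_eq_add_of_lt hpos
        simp only [Nat.zero_add] at *
        have pascal := Nat.choose_succ_succ' (2*k+1+1) j
        have hmono : Nat.choose (2*k+1+1) j ≤ Nat.choose (2*k+1+1) (j+1) := by
          apply Nat.choose_le_succ_of_lt_half_left
          omega
        omega
    have hCr : (Nat.choose (2*k+1+1+1) m : ℝ) ≤ 2 * (Nat.choose (2*k+1+1) m : ℝ) := by
      exact_mod_cast hC
    have hexp : 2*k+1+1+1 - m = (2*k+1+1 - m) + 1 := by omega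
    rw [hexp, pow_succ]
    have hnn : (0:ℝ) ≤ ((k+1 - m + 1 : ℕ) : ℝ) * p ^ m * (1-p) ^ (2*k+1+1-m) * (1-p) := by
      positivity
    nlinarith [mul_le_mul_of_nonneg_left hCr hnn]
  · refine ⟨0, Finset.mem_range.mpr (by omega), ?_⟩
    simp only [Nat.sub_zero, Nat.choose_zero_right, Nat.cast_one, pow_zero]
    rw [pow_succ]
    have hpos : (0:ℝ) < ((k+1+1 : ℕ) : ℝ) * (1-p) ^ (2*k+1+1) * (1-p) := by
      positivity
    nlinarith
end

section
/- Let δ ≥ 2 be an integer and 0 ≤ p < 1 a real number, and define f(d,p) = ∑_{m=0}^{⌈d/2⌉} (⌈d/2⌉ − m + 1) · C(d+1, m) · p^m · (1−p)^{d+1−m}. If 2(1−p)·(2p + (1−p)·(d+4)/(d+2)) < 1 for all integers d ≥ δ, then for every integer d ≥ δ one has f(d, p) ≤ max(f(δ, p), f(δ+1, p)); that is, the supremum of f(d,p) over d ≥ δ is attained at d = δ or d = δ+1. -/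
lemma pascal_step (p q : ℝ) (n K : ℕ) (hK : K ≤ n) (w : ℕ → ℝ) :
    ∑ m ∈ Finset.range (K+1), w m * (Nat.choose (n+1) m : ℝ) * p ^ m * q ^ (n+1-m)
      = q * ∑ m ∈ Finset.range (K+1), w m * (Nat.choose n m : ℝ) * p ^ m * q ^ (n-m)
        + p * ∑ m ∈ Finset.range K, w (m+1) * (Nat.choose n m : ℝ) * p ^ m * q ^ (n-m) := by
  rw [Finset.sum_range_succ' (fun m => w m * (Nat.choose (n+1) m : ℝ) * p ^ m * q ^ (n+1-m)) K]
  rw [Finset.sum_range_succ' (fun m => w m * (Nat.choose n m : ℝ) * p ^ m * q ^ (n-m)) K]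
  have main : ∀ m ∈ Finset.range K,
      w (m+1) * (Nat.choose (n+1) (m+1) : ℝ) * p ^ (m+1) * q ^ (n+1-(m+1))
        = q * (w (m+1) * (Nat.choose n (m+1) : ℝ) * p ^ (m+1) * q ^ (n-(m+1)))
          + p * (w (m+1) * (Nat.choose n m : ℝ) * p ^ m * q ^ (n-m)) := by
    intro m hm
    have hm' : m < K := Finset.mem_range.mp hm
    have h1 : n + 1 - (m+1) = (n - (m+1)) + 1 := by omega
    have h2 : n - m = (n - (m+1)) + 1 := by omega
    rw [Nat.choose_succ_succ, h1, h2]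
    push_cast
    ring
  rw [Finset.sum_congr rfl main, Finset.sum_add_distrib]
  rw [← Finset.mul_sum, ← Finset.mul_sum]
  simp only [Nat.choose_zero_right, Nat.cast_one, pow_zero, Nat.sub_zero]
  rw [pow_succ]
  ring

set_option maxHeartbeats 1000000 in
lemma fdp_add_two_le (p : ℝ) (hp0 : 0 ≤ p) (hp1 : p < 1) (h2q : 2 * (1 - p) ≤ p)
    (d : ℕ) (hd : 2 ≤ d) : fdp (d + 2) p ≤ fdp d p := by
  set q : ℝ := 1 - p with hq
  have hq0 : 0 ≤ q := by rw [hq]; linarith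
  set k : ℕ := (d + 1) / 2 with hk
  have hkd : k ≤ d := by omega
  -- express fdp (d+2) p via the weight function w m = k+2-m
  have h1 : fdp (d+2) p
      = ∑ m ∈ Finset.range (k+1+1),
          (fun m => ((k + 2 - m : ℕ) : ℝ)) m * (Nat.choose (d+2+1) m : ℝ) * p ^ m
            * q ^ (d+2+1-m) := by
    unfold fdp
    have hk2 : (d + 2 + 1) / 2 = k + 1 := by omega
    rw [hk2]
    refine Finset.sum_congr rfl fun m hm => ?_
    have hm' : m < k + 1 + 1 := Finset.mem_range.mp hm
    have hnat : k + 1 - m + 1 = k + 2 - m := by omega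
    simp only [hnat, hq]
  rw [pascal_step p q (d+2) (k+1) (by omega) (fun m => ((k + 2 - m : ℕ) : ℝ))] at h1
  have e2 := pascal_step p q (d+1) (k+1) (by omega) (fun m => ((k + 2 - m : ℕ) : ℝ))
  have e3 := pascal_step p q (d+1) k (by omega) (fun m => ((k + 2 - (m+1) : ℕ) : ℝ))
  norm_num at e2 e3
  rw [e2, e3] at h1
  -- abbreviations
  set S : ℝ := ∑ m ∈ Finset.range (k+1), (Nat.choose (d+1) m : ℝ) * p ^ m * q ^ (d+1-m)
    with hS
  have hS0 : 0 ≤ S := by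
    rw [hS]; exact Finset.sum_nonneg fun m _ => by positivity
  have hAkS : (Nat.choose (d+1) k : ℝ) * p ^ k * q ^ (d+1-k) ≤ S := by
    rw [hS]
    exact Finset.single_le_sum (f := fun m => (Nat.choose (d+1) m : ℝ) * p ^ m * q ^ (d+1-m))
      (fun m _ => by positivity) (Finset.self_mem_range_succ k)
  -- fdp d p as a sum with weights k+1-m
  have hFsum : fdp d p
      = ∑ m ∈ Finset.range (k+1),
          ((k + 2 - (m+1) : ℕ) : ℝ) * (Nat.choose (d+1) m : ℝ) * p ^ m * q ^ (d+1-m) := by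
    unfold fdp
    rw [← hk]
    refine Finset.sum_congr rfl fun m hm => ?_
    have hm' : m < k + 1 := Finset.mem_range.mp hm
    have hnat : k - m + 1 = k + 2 - (m + 1) := by omega
    rw [hnat, hq]
  -- fact1 : the (k+2)-sum
  have fact1 : ∑ m ∈ Finset.range (k+1+1),
        ((k + 2 - m : ℕ) : ℝ) * (Nat.choose (d+1) m : ℝ) * p ^ m * q ^ (d+1-m)
      = fdp d p + S + (Nat.choose (d+1) (k+1) : ℝ) * p ^ (k+1) * q ^ (d+1-(k+1)) := by
    rw [Finset.sum_range_succ]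
    have hwk1 : ((k + 2 - (k+1) : ℕ) : ℝ) = 1 := by norm_num
    have congr1 : ∀ m ∈ Finset.range (k+1),
        ((k + 2 - m : ℕ) : ℝ) * (Nat.choose (d+1) m : ℝ) * p ^ m * q ^ (d+1-m)
          = ((k + 2 - (m+1) : ℕ) : ℝ) * (Nat.choose (d+1) m : ℝ) * p ^ m * q ^ (d+1-m)
            + (Nat.choose (d+1) m : ℝ) * p ^ m * q ^ (d+1-m) := by
      intro m hm
      have hm' : m < k + 1 := Finset.mem_range.mp hm
      have hnat : k + 2 - m = (k + 2 - (m+1)) + 1 := by omega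
      rw [hnat]
      push_cast
      ring
    rw [Finset.sum_congr rfl congr1, Finset.sum_add_distrib, ← hS, ← hFsum, hwk1]
    ring
  -- fact2 : the k-sum
  have fact2 : ∑ m ∈ Finset.range k,
        ((k + 2 - (m+1+1) : ℕ) : ℝ) * (Nat.choose (d+1) m : ℝ) * p ^ m * q ^ (d+1-m)
      = fdp d p - S := by
    have ext : ∑ m ∈ Finset.range (k+1),
          ((k + 2 - (m+1+1) : ℕ) : ℝ) * (Nat.choose (d+1) m : ℝ) * p ^ m * q ^ (d+1-m)
        = (∑ m ∈ Finset.range k,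
            ((k + 2 - (m+1+1) : ℕ) : ℝ) * (Nat.choose (d+1) m : ℝ) * p ^ m * q ^ (d+1-m))
          + ((k + 2 - (k+1+1) : ℕ) : ℝ) * (Nat.choose (d+1) k : ℝ) * p ^ k * q ^ (d+1-k) :=
      Finset.sum_range_succ _ k
    have hwk2 : ((k + 2 - (k+1+1) : ℕ) : ℝ) = 0 := by norm_num
    have congr2 : ∀ m ∈ Finset.range (k+1),
        ((k + 2 - (m+1+1) : ℕ) : ℝ) * (Nat.choose (d+1) m : ℝ) * p ^ m * q ^ (d+1-m)
          = ((k + 2 - (m+1) : ℕ) : ℝ) * (Nat.choose (d+1) m : ℝ) * p ^ m * q ^ (d+1-m)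
            - (Nat.choose (d+1) m : ℝ) * p ^ m * q ^ (d+1-m) := by
      intro m hm
      have hm' : m < k + 1 := Finset.mem_range.mp hm
      have hnat : k + 2 - (m+1) = (k + 2 - (m+1+1)) + 1 := by omega
      rw [hnat]
      push_cast
      ring
    have := (Finset.sum_congr rfl congr2).symm.trans ext
    rw [Finset.sum_sub_distrib, ← hS, ← hFsum, hwk2] at this
    linarith
  rw [fact1, ← hFsum, fact2] at h1
  -- key identity
  set B : ℝ := (Nat.choose (d+1) (k+1) : ℝ) * p ^ (k+1) * q ^ (d+1-(k+1)) with hB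
  have hB0 : 0 ≤ B := by rw [hB]; positivity
  have hpq : q + p = 1 := by rw [hq]; ring
  have key : fdp (d+2) p = fdp d p + (q - p) * S + q^2 * B := by
    rw [h1]
    linear_combination ((q + p + 1) * fdp d p + (q - p) * S) * hpq
  -- the inequality q*B ≤ p*Ak
  set Ak : ℝ := (Nat.choose (d+1) k : ℝ) * p ^ k * q ^ (d+1-k) with hAk
  have hAk0 : 0 ≤ Ak := by rw [hAk]; positivity
  have hc : ((Nat.choose (d+1) (k+1) : ℕ) : ℝ) ≤ ((Nat.choose (d+1) k : ℕ) : ℝ) := by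
    have := Nat.choose_le_middle (k+1) (d+1)
    rw [← hk] at this
    exact_mod_cast this
  have e : d + 1 - (k+1) = d - k := by omega
  have e' : d + 1 - k = (d - k) + 1 := by omega
  have hqA : q * B ≤ p * Ak := by
    calc q * B = ((Nat.choose (d+1) (k+1) : ℕ) : ℝ) * (p ^ (k+1) * (q ^ (d-k) * q)) := by
          rw [hB, e]; ring
      _ ≤ ((Nat.choose (d+1) k : ℕ) : ℝ) * (p ^ (k+1) * (q ^ (d-k) * q)) := by
          apply mul_le_mul_of_nonneg_right hc
          positivity
      _ = p * Ak := by
          rw [hAk, e', pow_succ q (d-k), pow_succ p k]; ring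
  -- conclude
  rw [key]
  have t1 : q^2 * B ≤ q * (p * Ak) := by
    calc q^2 * B = q * (q * B) := by ring
      _ ≤ q * (p * Ak) := mul_le_mul_of_nonneg_left hqA hq0
  have t2 : q * (p * Ak) ≤ q * Ak := by
    apply mul_le_mul_of_nonneg_left _ hq0
    calc p * Ak ≤ 1 * Ak := mul_le_mul_of_nonneg_right (by linarith) hAk0
      _ = Ak := one_mul _
  have t3 : q * Ak ≤ q * S := mul_le_mul_of_nonneg_left hAkS hq0
  have t4 : 0 ≤ (p - 2*q) * S := mul_nonneg (by linarith) hS0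
  nlinarith [t1, t2, t3, t4]

theorem fdp_max_attained (δ : ℕ) (hδ : 2 ≤ δ) (p : ℝ) (hp0 : 0 ≤ p) (hp1 : p < 1)
    (hcond : ∀ d : ℕ, δ ≤ d →
      2 * (1 - p) * (2 * p + (1 - p) * ((d : ℝ) + 4) / ((d : ℝ) + 2)) < 1) :
    ∀ d : ℕ, δ ≤ d → fdp d p ≤ max (fdp δ p) (fdp (δ + 1) p) := by
  -- First derive 2 * (1 - p) ≤ p from the condition at d = δ
  have hc := hcond δ le_rfl
  have hx0 : (0:ℝ) < (δ : ℝ) + 2 := by positivity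
  have hr1 : (1:ℝ) ≤ ((δ : ℝ) + 4) / ((δ : ℝ) + 2) := by
    rw [le_div_iff₀ hx0]; linarith
  rw [mul_div_assoc] at hc
  have hq0 : (0:ℝ) ≤ 1 - p := by linarith
  have hmon : (1 - p) * 1 ≤ (1 - p) * (((δ : ℝ) + 4) / ((δ : ℝ) + 2)) :=
    mul_le_mul_of_nonneg_left hr1 hq0
  have h3 : 2 * (1 - p) * (2 * p + (1 - p)) < 1 := by
    calc 2 * (1 - p) * (2 * p + (1 - p))
        ≤ 2 * (1 - p) * (2 * p + (1 - p) * (((δ : ℝ) + 4) / ((δ : ℝ) + 2))) := by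
          apply mul_le_mul_of_nonneg_left _ (by linarith)
          linarith
      _ < 1 := hc
  have h2q : 2 * (1 - p) ≤ p := by nlinarith [sq_nonneg (3 * p - 2), h3, hp0]
  -- Strong induction
  intro d
  induction d using Nat.strong_induction_on with
  | _ d ih =>
    intro hdδ
    rcases Nat.lt_or_ge d (δ + 2) with hlt | hge
    · rcases (by omega : d = δ ∨ d = δ + 1) with rfl | rfl
      · exact le_max_left _ _
      · exact le_max_right _ _
    · obtain ⟨e, rfl⟩ : ∃ e, d = e + 2 := ⟨d - 2, by omega⟩
      have hstep := fdp_add_two_le p hp0 hp1 h2q e (by omega)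
      exact hstep.trans (ih e (by omega) (by omega))
end

section
/- For every integer d ≥ 1 and every integer m with 0 ≤ m ≤ ⌈d/2⌉, the inequality (⌈d/2⌉ − m + 1) · C(d+1, m) ≤ C(d+1, ⌈d/2⌉) · C(⌈d/2⌉, m) holds, where C(a,b) denotes the binomial coefficient. -/
/-!
By the subset-of-a-subset identity `C(d+1, k) C(k, m) = C(d+1, m) C(d+1-m, k-m)` with
`k = ⌈d/2⌉ = (d+1)/2`, it suffices that `k - m + 1 ≤ C(d+1-m, k-m)`. Since `2(k-m) ≤ d+1-m`,
the right side is at least the central binomial coefficient `C(2(k-m), k-m)`, which is divisible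
by `k - m + 1` (the Catalan number is an integer).
-/

namespace Nat

theorem succ_le_centralBinom (n : ℕ) : n + 1 ≤ n.centralBinom :=
  le_of_dvd (centralBinom_pos n) (succ_dvd_centralBinom n)

theorem succ_le_choose_of_two_mul_le {n k : ℕ} (h : 2 * k ≤ n) : k + 1 ≤ n.choose k :=
  calc k + 1 ≤ k.centralBinom := succ_le_centralBinom k
    _ = (2 * k).choose k := centralBinom_eq_two_mul_choose k
    _ ≤ n.choose k := choose_le_choose k h

end Nat

theorem choose_weighted_inequality_general (d m : ℕ) (hm : m ≤ (d + 1) / 2) :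
    ((d + 1) / 2 - m + 1) * Nat.choose (d + 1) m ≤
      Nat.choose (d + 1) ((d + 1) / 2) * Nat.choose ((d + 1) / 2) m := by
  rw [Nat.choose_mul hm, Nat.mul_comm]
  apply Nat.mul_le_mul_left
  exact Nat.succ_le_choose_of_two_mul_le (by omega)

theorem choose_weighted_inequality (d m : ℕ) (hd : 1 ≤ d) (hm : m ≤ (d + 1) / 2) :
    ((d + 1) / 2 - m + 1) * Nat.choose (d + 1) m ≤
      Nat.choose (d + 1) ((d + 1) / 2) * Nat.choose ((d + 1) / 2) m :=
  choose_weighted_inequality_general d m hm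
end

section
/- Let G be a finite simple graph with n vertices whose degree sequence listed in nondecreasing order is d_1 ≤ d_2 ≤ ... ≤ d_n, and let f be a signed domination function of G with X = {v ∈ V(G) : f(v) = −1}. Then ∑_{i=1}^{|X|} (⌈d_i/2⌉ + 1) ≤ ∑_{i=|X|+1}^{n} ⌊d_i/2⌋ (where the empty sum is 0). -/
open Finset

lemma strictMono_fin_val_le {x n : ℕ} {g : Fin x → Fin n} (hg : StrictMono g) (j : Fin x) :
    (j : ℕ) ≤ (g j : ℕ) := by
  obtain ⟨m, hm⟩ := j
  induction m with
  | zero => exact Nat.zero_le _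
  | succ k ih =>
    have hk : k < x := Nat.lt_of_succ_lt hm
    have h1 := ih hk
    have h2 : g ⟨k, hk⟩ < g ⟨k + 1, hm⟩ := hg (by simp [Fin.lt_def])
    have h3 := Fin.lt_def.mp h2
    simp only [Fin.val_mk] at h1 h3 ⊢
    omega

lemma sum_first_le {n x : ℕ} (h : Fin n → ℕ) (hm : Monotone h) (s : Finset (Fin n))
    (hs : s.card = x) :
    ∑ i ∈ univ.filter (fun i : Fin n => (i : ℕ) < x), h i ≤ ∑ i ∈ s, h i := by
  have hxn : x ≤ n := by
    have h1 := Finset.card_le_univ s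
    simp only [Finset.card_univ, Fintype.card_fin, hs] at h1
    exact h1
  have himg : Finset.image (s.orderEmbOfFin hs) univ = s := by
    ext i
    simp only [mem_image, mem_univ, true_and]
    constructor
    · rintro ⟨j, rfl⟩; exact s.orderEmbOfFin_mem hs j
    · intro hi
      have h2 : i ∈ Set.range (s.orderEmbOfFin hs) := by
        rw [range_orderEmbOfFin]; exact hi
      exact h2
  have himg2 : Finset.image (Fin.castLE hxn) univ
      = univ.filter (fun i : Fin n => (i : ℕ) < x) := by
    ext i
    simp only [mem_image, mem_univ, true_and, mem_filter]
    constructor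
    · rintro ⟨j, rfl⟩
      simpa using j.isLt
    · intro hi
      exact ⟨⟨i, hi⟩, rfl⟩
  rw [← himg, ← himg2,
    Finset.sum_image (fun a _ b _ hab => (s.orderEmbOfFin hs).injective hab),
    Finset.sum_image (fun a _ b _ hab => (Fin.castLE_injective hxn) hab)]
  apply Finset.sum_le_sum
  intro j _
  apply hm
  rw [Fin.le_def]
  simpa using strictMono_fin_val_le (s.orderEmbOfFin hs).strictMono j

lemma sum_pm {V : Type*} [DecidableEq V] (f : V → ℤ) (h1 : ∀ v, f v = 1 ∨ f v = -1)
    (s : Finset V) :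
    ∑ u ∈ s, f u = (s.card : ℤ) - 2 * (s.filter (fun u => f u = -1)).card := by
  classical
  have hcong : ∀ u ∈ s, f u = 1 - 2 * (if f u = -1 then (1:ℤ) else 0) := by
    intro u _
    rcases h1 u with h | h <;> simp [h]
  rw [Finset.sum_congr rfl hcong, Finset.sum_sub_distrib, Finset.sum_const, ← Finset.mul_sum,
    Finset.sum_boole]
  ring

open Finset in
theorem sdf_degree_sequence_inequality
    {V : Type*} [Fintype V] [DecidableEq V] (G : SimpleGraph V) [DecidableRel G.Adj]
    (n : ℕ) (hn : n = Fintype.card V)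
    (σ : V ≃ Fin n) (d : Fin n → ℕ) (hmono : Monotone d)
    (hdeg : ∀ v : V, d (σ v) = G.degree v)
    (f : V → ℤ) (hf : G.IsSignedDominationFunction f)
    (x : ℕ) (hx : x = (univ.filter (fun v => f v = -1)).card) :
    ∑ i ∈ univ.filter (fun i : Fin n => (i : ℕ) < x), ((d i + 1) / 2 + 1) ≤
      ∑ i ∈ univ.filter (fun i : Fin n => x ≤ (i : ℕ)), d i / 2 := by
  classical
  obtain ⟨hf1, hf2⟩ := hf
  set X : Finset V := univ.filter (fun v => f v = -1) with hX
  set P : Finset V := univ.filter (fun v => f v = 1) with hP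
  set A : V → Finset V := fun v => (G.neighborFinset v).filter (fun u => f u = -1) with hA
  set B : V → Finset V := fun v => (G.neighborFinset v).filter (fun u => f u = 1) with hB
  -- basic closed neighbourhood computation
  have hAB : ∀ v, (A v).card + (B v).card = G.degree v := by
    intro v
    rw [← G.card_neighborFinset_eq_degree v, hA, hB]
    rw [← Finset.card_filter_add_card_filter_not
      (p := fun u => f u = -1) (s := G.neighborFinset v)]
    congr 2
    apply Finset.filter_congr
    intro u _
    rcases hf1 u with h | h <;> simp [h]
  have hkey : ∀ v, 1 ≤ (G.degree v + 1 : ℤ)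
      - 2 * ((insert v (G.neighborFinset v)).filter (fun u => f u = -1)).card := by
    intro v
    have := hf2 v
    rwa [sum_pm f hf1, Finset.card_insert_of_notMem (G.notMem_neighborFinset_self v),
      G.card_neighborFinset_eq_degree, Nat.cast_add, Nat.cast_one] at this
  -- for v in X
  have hXdeg : ∀ v ∈ X, (G.degree v + 1) / 2 + 1 ≤ (B v).card := by
    intro v hv
    have hv' : f v = -1 := by simpa [hX] using hv
    have h1 := hkey v
    rw [Finset.filter_insert, if_pos hv',
      Finset.card_insert_of_notMem (fun hc => G.notMem_neighborFinset_self v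
        (Finset.mem_of_mem_filter v hc))] at h1
    have h2 := hAB v
    simp only [hA, hB] at h1 h2 ⊢
    push_cast at h1
    omega
  -- for v in P
  have hPdeg : ∀ v ∈ P, (A v).card ≤ G.degree v / 2 := by
    intro v hv
    have hv' : f v = 1 := by simpa [hP] using hv
    have h1 := hkey v
    rw [Finset.filter_insert, if_neg (by rw [hv']; norm_num)] at h1
    have h2 := hAB v
    simp only [hA, hB] at h1 h2 ⊢
    push_cast at h1
    omega
  -- double counting
  have hcount : ∑ v ∈ X, (B v).card = ∑ v ∈ P, (A v).card := by
    have hBcard : ∀ v, (B v).card = ∑ u ∈ P, if G.Adj v u then 1 else 0 := by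
      intro v
      rw [← Finset.card_filter]
      congr 1
      ext u
      simp [hB, hP, SimpleGraph.mem_neighborFinset, and_comm]
    have hAcard : ∀ u, (A u).card = ∑ v ∈ X, if G.Adj v u then 1 else 0 := by
      intro u
      rw [← Finset.card_filter]
      congr 1
      ext v
      simp only [hA, hX, Finset.mem_filter, SimpleGraph.mem_neighborFinset, mem_univ, true_and]
      rw [G.adj_comm]
      tauto
    simp_rw [hBcard, hAcard]
    exact Finset.sum_comm
  -- transfer to Fin n
  set sX : Finset (Fin n) := X.image σ with hsX
  have hsXcard : sX.card = x := by
    rw [hsX, Finset.card_image_of_injective _ σ.injective, hx]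
  have hsP : P.image σ = univ \ sX := by
    ext i
    simp only [hsX, Finset.mem_image, Finset.mem_sdiff, mem_univ, true_and]
    constructor
    · rintro ⟨v, hv, rfl⟩
      have hv' : f v = 1 := by simpa [hP] using hv
      rintro ⟨w, hw, hww⟩
      have : w = v := σ.injective hww
      subst this
      have : f w = -1 := by simpa [hX] using hw
      omega
    · intro hi
      refine ⟨σ.symm i, ?_, by simp⟩
      rcases hf1 (σ.symm i) with h | h
      · simp [hP, h]
      · exact absurd ⟨σ.symm i, by simp [hX, h]⟩ hi
  -- monotone functions
  have hm1 : Monotone (fun i => (d i + 1) / 2 + 1) := by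
    intro a b hab
    have := hmono hab
    dsimp only
    omega
  have hm2 : Monotone (fun i => d i / 2) := by
    intro a b hab
    have := hmono hab
    dsimp only
    omega
  -- the chain
  have step1 : ∑ i ∈ univ.filter (fun i : Fin n => (i : ℕ) < x), ((d i + 1) / 2 + 1)
      ≤ ∑ v ∈ X, ((G.degree v + 1) / 2 + 1) := by
    calc _ ≤ ∑ i ∈ sX, ((d i + 1) / 2 + 1) := sum_first_le _ hm1 sX hsXcard
    _ = ∑ v ∈ X, ((d (σ v) + 1) / 2 + 1) :=
        Finset.sum_image (fun a _ b _ hab => σ.injective hab)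
    _ = _ := by simp_rw [hdeg]
  have step2 : ∑ v ∈ X, ((G.degree v + 1) / 2 + 1) ≤ ∑ v ∈ X, (B v).card :=
    Finset.sum_le_sum hXdeg
  have step3 : ∑ v ∈ P, (A v).card ≤ ∑ v ∈ P, G.degree v / 2 :=
    Finset.sum_le_sum hPdeg
  have step4 : ∑ v ∈ P, G.degree v / 2 = ∑ i ∈ univ \ sX, d i / 2 := by
    rw [← hsP, Finset.sum_image (fun a _ b _ hab => σ.injective hab)]
    simp_rw [hdeg]
  -- final arithmetic
  have htot : ∑ i ∈ univ \ sX, d i / 2 + ∑ i ∈ sX, d i / 2 = ∑ i : Fin n, d i / 2 :=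
    Finset.sum_sdiff (Finset.subset_univ sX)
  have hsplit : ∑ i ∈ univ.filter (fun i : Fin n => (i : ℕ) < x), d i / 2
      + ∑ i ∈ univ.filter (fun i : Fin n => x ≤ (i : ℕ)), d i / 2 = ∑ i : Fin n, d i / 2 := by
    rw [← Finset.sum_filter_add_sum_filter_not univ (fun i : Fin n => (i : ℕ) < x)]
    congr 1
    apply Finset.sum_congr _ (fun _ _ => rfl)
    apply Finset.filter_congr
    intro i _
    simp [Nat.not_lt]
  have hc : ∑ i ∈ univ.filter (fun i : Fin n => (i : ℕ) < x), d i / 2 ≤ ∑ i ∈ sX, d i / 2 :=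
    sum_first_le _ hm2 sX hsXcard
  omega
end
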